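/- For every integer 1 ≤ t ≤ n and every changepoint vector τ ∈ T_t, the function φ ↦ f_τ^t(φ) is a quadratic polynomial with strictly positive leading coefficient: there exist reals a, b, c with c > 0 such that f_τ^t(φ) = a + b·φ + c·φ² for all φ ∈ ℝ. -/

import Mathlib

/-!
Dynamic programming over the last changepoint `s` gives
`f_{τ ++ [s]}^t(φ) = inf_ψ (f_τ^s(ψ) + C(s, t, ψ, φ)) + h(t - s) + β`, and the same identity with
`f ≡ 0` and `s = 0` for `τ = []`. Since `C(s, t, ψ, φ)` is a quadratic form in `(ψ, φ)`, by
induction the infimum is over a quadratic in `(ψ, φ)` that is bounded below in `ψ`; completing the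
square in `ψ` leaves a quadratic in `φ`. Its leading coefficient is at least `1 / σ²`, because the
last data point `y_t` alone contributes `(y_t - φ)² / σ²` to every term of the infimum.
-/

open Finset

/-- Segment cost `C(s,t,φ,ψ)`: cost of fitting data `y_{s+1:t}` with a linear
function taking value `φ` at time `s` and value `ψ` at time `t`. -/
noncomputable def segCost (y : ℕ → ℝ) (σ : ℝ) (s t : ℕ) (φ ψ : ℝ) : ℝ :=
  (1 / σ ^ 2) * ∑ j ∈ Finset.Icc (s + 1) t,
    (y j - φ - ((ψ - φ) / ((t : ℝ) - (s : ℝ))) * ((j : ℝ) - (s : ℝ))) ^ 2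

/-- `ValidCP t τ` : `τ` is a (possibly empty) strictly increasing vector of
changepoints `0 < τ₁ < ⋯ < τ_k < t`, i.e. an element of `T_t`. -/
def ValidCP (t : ℕ) (τ : List ℕ) : Prop :=
  τ.Chain' (· < ·) ∧ ∀ x ∈ τ, 0 < x ∧ x < t

/-- Penalised cost of segmenting `y_{1:t}` with changepoints `τ = (τ₁,…,τ_k)`,
fitted values `φs 0, …, φs k` at times `0, τ₁, …, τ_k`, and fitted value `φ` at time `t`. -/
noncomputable def segTotal (y : ℕ → ℝ) (σ β : ℝ) (h : ℕ → ℝ) (t : ℕ)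
    (τ : List ℕ) (φs : ℕ → ℝ) (φ : ℝ) : ℝ :=
  let p : ℕ → ℕ := fun i => (0 :: τ).getD i 0
  (∑ i ∈ Finset.range τ.length,
      (segCost y σ (p i) (p (i + 1)) (φs i) (φs (i + 1)) + h (p (i + 1) - p i)))
    + segCost y σ (p τ.length) t (φs τ.length) φ + h (t - p τ.length)
    + β * ((τ.length : ℝ) + 1)

/-- `f_τ^t(φ)` : minimum penalised cost of segmenting `y_{1:t}` with changepoints `τ`
and fitted value `φ` at time `t`, minimised over the fitted values at the changepoints. -/
noncomputable def fseg (y : ℕ → ℝ) (σ β : ℝ) (h : ℕ → ℝ) (t : ℕ)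
    (τ : List ℕ) (φ : ℝ) : ℝ :=
  ⨅ φs : ℕ → ℝ, segTotal y σ β h t τ φs φ

/-- `f^t(φ)` : minimum penalised cost of segmenting `y_{1:t}` with fitted value `φ`
at time `t`, minimised over all changepoint vectors in `T_t`; `f^0 ≡ 0`. -/
noncomputable def fDP (y : ℕ → ℝ) (σ β : ℝ) (h : ℕ → ℝ) (t : ℕ) (φ : ℝ) : ℝ :=
  if t = 0 then 0 else ⨅ τ : {τ : List ℕ // ValidCP t τ}, fseg y σ β h t τ.1 φ

theorem nonneg_of_forall_le_quadratic {A B D m : ℝ} (h : ∀ x, m ≤ A * x ^ 2 + B * x + D) :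
    0 ≤ A := by
  by_contra! hA
  set x := (|B| + |D - m| + 1) / -A + 1
  have hxA : -A * (x - 1) = |B| + |D - m| + 1 := by simp only [x]; field_simp [hA.ne]; ring
  nlinarith [h x, le_abs_self B, neg_abs_le B, le_abs_self (D - m), abs_nonneg B, abs_nonneg (D - m)]

/-- When `A = 0` the boundedness forces `B = 0`, and the junk value `B ^ 2 / 0 = 0` makes the
formula right in that case too. -/
theorem ciInf_quadratic {A B D m : ℝ} (h : ∀ x, m ≤ A * x ^ 2 + B * x + D) :
    ⨅ x, A * x ^ 2 + B * x + D = D - B ^ 2 / (4 * A) := by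
  have hdisc : discrim A B (D - m) ≤ 0 :=
    discrim_le_zero fun x => by linarith [h x, show A * (x * x) = A * x ^ 2 by ring]
  rcases (nonneg_of_forall_le_quadratic h).eq_or_lt with rfl | hA
  · obtain rfl : B = 0 := by
      rw [discrim] at hdisc; nlinarith [sq_nonneg B]
    simp
  · refine IsGLB.ciInf_eq ⟨?_, fun b hb => ?_⟩
    · rintro _ ⟨x, rfl⟩
      have hsq : A * x ^ 2 + B * x + D - (D - B ^ 2 / (4 * A)) = (2 * A * x + B) ^ 2 / (4 * A) := by
        field_simp; ring
      linarith [div_nonneg (sq_nonneg (2 * A * x + B)) (by linarith : (0:ℝ) ≤ 4 * A)]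
    · convert hb ⟨-B / (2 * A), rfl⟩ using 1
      field_simp; ring

theorem exists_sum_sq_affine_eq_quadratic {ι : Type*} (s : Finset ι) (u v w : ι → ℝ) :
    ∃ A B C D E F : ℝ, ∀ χ φ : ℝ, ∑ j ∈ s, (u j * χ + v j * φ + w j) ^ 2 =
      A * χ ^ 2 + B * (χ * φ) + C * φ ^ 2 + D * χ + E * φ + F := by
  refine ⟨∑ j ∈ s, u j ^ 2, ∑ j ∈ s, 2 * u j * v j, ∑ j ∈ s, v j ^ 2, ∑ j ∈ s, 2 * u j * w j,
    ∑ j ∈ s, 2 * v j * w j, ∑ j ∈ s, w j ^ 2, fun χ φ => ?_⟩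
  simp only [Finset.sum_mul, ← Finset.sum_add_distrib]
  exact Finset.sum_congr rfl fun j _ => by ring

theorem exists_segCost_eq_quadratic (y : ℕ → ℝ) (σ : ℝ) (s t : ℕ) :
    ∃ A B C D E F : ℝ, ∀ χ φ : ℝ, segCost y σ s t χ φ =
      A * χ ^ 2 + B * (χ * φ) + C * φ ^ 2 + D * χ + E * φ + F := by
  set r : ℕ → ℝ := fun j => ((j : ℝ) - s) / ((t : ℝ) - s)
  obtain ⟨A, B, C, D, E, F, hq⟩ :=
    exists_sum_sq_affine_eq_quadratic (Finset.Icc (s + 1) t) (fun j => r j - 1) (fun j => -r j) y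
  refine ⟨A / σ ^ 2, B / σ ^ 2, C / σ ^ 2, D / σ ^ 2, E / σ ^ 2, F / σ ^ 2, fun χ φ => ?_⟩
  have hsummand : ∀ j, y j - χ - (φ - χ) / ((t : ℝ) - s) * ((j : ℝ) - s) =
      (r j - 1) * χ + -r j * φ + y j := fun j => by simp only [r]; ring
  simp only [segCost, hsummand, hq]
  ring

theorem segCost_nonneg (y : ℕ → ℝ) (σ : ℝ) (s t : ℕ) (χ φ : ℝ) : 0 ≤ segCost y σ s t χ φ :=
  mul_nonneg (by positivity) (Finset.sum_nonneg fun _ _ => sq_nonneg _)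

theorem sq_sub_le_segCost (y : ℕ → ℝ) (σ : ℝ) {s t : ℕ} (hst : s < t) (χ φ : ℝ) :
    1 / σ ^ 2 * (y t - φ) ^ 2 ≤ segCost y σ s t χ φ := by
  have hts : (t : ℝ) - s ≠ 0 := sub_ne_zero.mpr (Nat.cast_injective.ne hst.ne')
  have hlast : y t - χ - (φ - χ) / ((t : ℝ) - s) * ((t : ℝ) - s) = y t - φ := by
    rw [div_mul_cancel₀ _ hts]; ring
  refine mul_le_mul_of_nonneg_left ?_ (by positivity)
  rw [← hlast]
  exact Finset.single_le_sum
    (f := fun j : ℕ => (y j - χ - (φ - χ) / ((t : ℝ) - s) * ((j : ℝ) - s)) ^ 2)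
    (fun _ _ => sq_nonneg _) (Finset.mem_Icc.mpr ⟨hst, le_rfl⟩)

section Segmentation

variable (y : ℕ → ℝ) (σ β : ℝ) (h : ℕ → ℝ)

theorem segTotal_nil (t : ℕ) (φs : ℕ → ℝ) (φ : ℝ) :
    segTotal y σ β h t [] φs φ = segCost y σ 0 t (φs 0) φ + (h t + β) := by
  simp [segTotal, add_assoc]

theorem segTotal_append (t s : ℕ) (τ : List ℕ) (φs : ℕ → ℝ) (φ : ℝ) :
    segTotal y σ β h t (τ ++ [s]) φs φ = segTotal y σ β h s τ φs (φs (τ.length + 1)) +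
      (segCost y σ s t (φs (τ.length + 1)) φ + (h (t - s) + β)) := by
  have hcons : 0 :: (τ ++ [s]) = (0 :: τ) ++ [s] := rfl
  have hprefix : ∀ i ≤ τ.length, (0 :: (τ ++ [s])).getD i 0 = (0 :: τ).getD i 0 :=
    fun i hi => by rw [hcons, List.getD_append _ _ _ _ (by simp; omega)]
  have hlast : (0 :: (τ ++ [s])).getD (τ.length + 1) 0 = s := by
    rw [hcons, List.getD_append_right _ _ _ _ (by simp)]; simp
  simp only [segTotal, List.length_append, List.length_singleton, Finset.sum_range_succ, hlast,
    hprefix _ le_rfl]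
  rw [Finset.sum_congr rfl fun i hi => by
    rw [hprefix i (Finset.mem_range.mp hi).le, hprefix (i + 1) (Finset.mem_range.mp hi)]]
  push_cast
  ring

theorem segTotal_congr (t : ℕ) (τ : List ℕ) {φs φs' : ℕ → ℝ}
    (hφs : ∀ i ≤ τ.length, φs i = φs' i) (φ : ℝ) :
    segTotal y σ β h t τ φs φ = segTotal y σ β h t τ φs' φ := by
  simp only [segTotal, hφs τ.length le_rfl]
  rw [Finset.sum_congr rfl fun i hi => by
    rw [hφs i (Finset.mem_range.mp hi).le, hφs (i + 1) (Finset.mem_range.mp hi)]]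

theorem exists_forall_le_segTotal (t : ℕ) (τ : List ℕ) :
    ∃ L, ∀ φs φ, L ≤ segTotal y σ β h t τ φs φ := by
  refine ⟨(∑ i ∈ Finset.range τ.length, h ((0 :: τ).getD (i + 1) 0 - (0 :: τ).getD i 0)) +
    h (t - (0 :: τ).getD τ.length 0) + β * (τ.length + 1), fun φs φ => ?_⟩
  have hsum := Finset.sum_le_sum fun i (_ : i ∈ Finset.range τ.length) =>
    le_add_of_nonneg_left (a := h ((0 :: τ).getD (i + 1) 0 - (0 :: τ).getD i 0))
      (segCost_nonneg y σ ((0 :: τ).getD i 0) ((0 :: τ).getD (i + 1) 0) (φs i) (φs (i + 1)))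
  have hlast := segCost_nonneg y σ ((0 :: τ).getD τ.length 0) t (φs τ.length) φ
  simp only [segTotal]
  linarith

theorem exists_forall_le_fseg (t : ℕ) (τ : List ℕ) : ∃ L, ∀ φ, L ≤ fseg y σ β h t τ φ := by
  obtain ⟨L, hL⟩ := exists_forall_le_segTotal y σ β h t τ
  exact ⟨L, fun φ => le_ciInf fun φs => hL φs φ⟩

theorem fseg_nil (t : ℕ) (φ : ℝ) :
    fseg y σ β h t [] φ = ⨅ ψ, segCost y σ 0 t ψ φ + (h t + β) := by
  simp only [fseg, segTotal_nil]
  have hsurj : Function.Surjective fun φs : ℕ → ℝ => φs 0 := fun ψ => ⟨fun _ => ψ, rfl⟩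
  exact hsurj.iInf_comp fun ψ => segCost y σ 0 t ψ φ + (h t + β)

theorem fseg_append (t s : ℕ) (τ : List ℕ) (φ : ℝ) :
    fseg y σ β h t (τ ++ [s]) φ =
      ⨅ ψ, fseg y σ β h s τ ψ + (segCost y σ s t ψ φ + (h (t - s) + β)) := by
  obtain ⟨L, hL⟩ := exists_forall_le_segTotal y σ β h s τ
  set w := fun ψ => segCost y σ s t ψ φ + (h (t - s) + β)
  have hw : ∀ ψ, h (t - s) + β ≤ w ψ := fun ψ => by
    simp only [w]; linarith [segCost_nonneg y σ s t ψ φ]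
  have hsurj : Function.Surjective fun p : ℝ × (ℕ → ℝ) => Function.update p.2 (τ.length + 1) p.1 :=
    fun φs => ⟨(φs (τ.length + 1), φs), by simp⟩
  have hbdd : BddBelow (Set.range fun p : ℝ × (ℕ → ℝ) => segTotal y σ β h s τ p.2 p.1 + w p.1) :=
    ⟨L + (h (t - s) + β), by rintro _ ⟨p, rfl⟩; linarith [hL p.2 p.1, hw p.1]⟩
  calc fseg y σ β h t (τ ++ [s]) φ
      = ⨅ p : ℝ × (ℕ → ℝ), segTotal y σ β h s τ p.2 p.1 + w p.1 := by
        rw [fseg, ← hsurj.iInf_comp]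
        congr 1 with p
        rw [segTotal_append, Function.update_self,
          segTotal_congr y σ β h s τ fun i hi => Function.update_of_ne (by omega) _ _]
    _ = ⨅ ψ, ⨅ φs, segTotal y σ β h s τ φs ψ + w ψ := ciInf_prod hbdd
    _ = ⨅ ψ, fseg y σ β h s τ ψ + w ψ := by
        congr 1 with ψ
        exact ((OrderIso.addRight (w ψ)).map_ciInf ⟨L, by rintro _ ⟨φs, rfl⟩; exact hL φs ψ⟩).symm

end Segmentation

theorem exists_iInf_add_segCost_eq_quadratic (y : ℕ → ℝ) {σ : ℝ} (hσ : 0 < σ) {s t : ℕ}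
    (hst : s < t) {g : ℝ → ℝ} {a b c m : ℝ} (hg : ∀ ψ, g ψ = a + b * ψ + c * ψ ^ 2)
    (hm : ∀ ψ, m ≤ g ψ) (K : ℝ) :
    ∃ a' b' c' : ℝ, 0 < c' ∧
      ∀ φ, ⨅ ψ, g ψ + (segCost y σ s t ψ φ + K) = a' + b' * φ + c' * φ ^ 2 := by
  obtain ⟨A, B, C, D, E, F, hcost⟩ := exists_segCost_eq_quadratic y σ s t
  have hform : ∀ φ ψ, g ψ + (segCost y σ s t ψ φ + K) =
      (c + A) * ψ ^ 2 + (b + D + B * φ) * ψ + (a + C * φ ^ 2 + E * φ + F + K) := fun φ ψ => by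
    rw [hg, hcost]; ring
  have hlow : ∀ φ ψ, m + K ≤ g ψ + (segCost y σ s t ψ φ + K) := fun φ ψ => by
    linarith [hm ψ, segCost_nonneg y σ s t ψ φ]
  have hinf : ∀ φ, ⨅ ψ, g ψ + (segCost y σ s t ψ φ + K) =
      a + C * φ ^ 2 + E * φ + F + K - (b + D + B * φ) ^ 2 / (4 * (c + A)) := fun φ => by
    simp_rw [hform φ]
    exact ciInf_quadratic fun ψ => hform φ ψ ▸ hlow φ ψ
  set a' := a + F + K - (b + D) ^ 2 / (4 * (c + A))
  set b' := E - 2 * (b + D) * B / (4 * (c + A))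
  set c' := C - B ^ 2 / (4 * (c + A))
  have heq : ∀ φ, ⨅ ψ, g ψ + (segCost y σ s t ψ φ + K) = a' + b' * φ + c' * φ ^ 2 := fun φ => by
    rw [hinf]; ring
  have hgrowth : ∀ φ, m + K + 1 / σ ^ 2 * (y t - φ) ^ 2 ≤ a' + b' * φ + c' * φ ^ 2 := fun φ => by
    rw [← heq]
    exact le_ciInf fun ψ => by linarith [hm ψ, sq_sub_le_segCost y σ hst ψ φ]
  have hc' : 0 ≤ c' - 1 / σ ^ 2 := nonneg_of_forall_le_quadratic (B := b' + 2 * y t / σ ^ 2)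
    (D := a' - y t ^ 2 / σ ^ 2) (m := m + K) fun φ => by linear_combination hgrowth φ
  exact ⟨a', b', c', by linarith [show 0 < 1 / σ ^ 2 by positivity], heq⟩

theorem ValidCP.of_append {t s : ℕ} {τ : List ℕ} (hτ : ValidCP t (τ ++ [s])) :
    ValidCP s τ ∧ 0 < s ∧ s < t := by
  have hpw := List.pairwise_append.mp (List.isChain_iff_pairwise.mp hτ.1)
  exact ⟨⟨List.isChain_iff_pairwise.mpr hpw.1,
      fun x hx => ⟨(hτ.2 x (by simp [hx])).1, hpw.2.2 x hx s (by simp)⟩⟩,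
    hτ.2 s (by simp)⟩

theorem statement5_general (y : ℕ → ℝ) (σ : ℝ) (hσ : 0 < σ)
    (β : ℝ) (h : ℕ → ℝ)
    (t : ℕ) (ht1 : 1 ≤ t)
    (τ : List ℕ) (hτ : ValidCP t τ) :
    ∃ a b c : ℝ, 0 < c ∧ ∀ φ : ℝ, fseg y σ β h t τ φ = a + b * φ + c * φ ^ 2 := by
  induction τ using List.reverseRecOn generalizing t with
  | nil =>
    obtain ⟨a, b, c, hc, hq⟩ := exists_iInf_add_segCost_eq_quadratic y hσ ht1
      (g := fun _ => 0) (a := 0) (b := 0) (c := 0) (m := 0) (by simp) (fun _ => le_rfl) (h t + β)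
    exact ⟨a, b, c, hc, fun φ => by rw [fseg_nil, ← hq]; simp⟩
  | append_singleton τ s ih =>
    obtain ⟨hτs, hs, hst⟩ := hτ.of_append
    obtain ⟨a, b, c, -, hq⟩ := ih s hs hτs
    obtain ⟨m, hm⟩ := exists_forall_le_fseg y σ β h s τ
    obtain ⟨a', b', c', hc', hq'⟩ :=
      exists_iInf_add_segCost_eq_quadratic y hσ hst hq hm (h (t - s) + β)
    exact ⟨a', b', c', hc', fun φ => by rw [fseg_append, hq']⟩

/-- each `f_τ^t` is a quadratic in `φ` with strictly positive
leading coefficient. -/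
theorem statement5 (n : ℕ) (hn : 1 ≤ n) (y : ℕ → ℝ) (σ : ℝ) (hσ : 0 < σ)
    (β : ℝ) (hβ : 0 < β) (h : ℕ → ℝ)
    (t : ℕ) (ht1 : 1 ≤ t) (htn : t ≤ n)
    (τ : List ℕ) (hτ : ValidCP t τ) :
    ∃ a b c : ℝ, 0 < c ∧ ∀ φ : ℝ, fseg y σ β h t τ φ = a + b * φ + c * φ ^ 2 :=
  statement5_general y σ hσ β h t ht1 τ hτ
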